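/- arXiv:1912.01081 — 2 statements merged into one kernel-verified Lean document; each statement's English description precedes it below -/
import Mathlib

section
/- (Frieze–Kannan Regularity Lemma.) For every γ > 0 and every positive integer k₀, there exists a positive integer K (which may be taken of the form k₀ · 2^{poly(1/γ)}) such that every graph Γ on n ≥ K vertices admits a γ-FK-regular equipartition into k classes, where k₀ ≤ k ≤ K. -/
/-!
Apply Szemerédi's regularity lemma with `ε = γ / 10` and at least `max k₀ ⌈4 / γ⌉` parts
(so `K` is of tower type in `1 / γ`). For parts `U, W` and a rectangle `S × T ⊆ U × W`, the
discrepancy `e(S, T) - d(U, W) |S| |T|` is at most `ε |U| |W|` if `(U, W)` is `ε`-uniform, and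
at most `|U| |W|` otherwise. The non-uniform pairs of parts cover at most `4 ε n²` pairs of
vertices and the diagonal ones at most `2 n² / k`, so every vertex rectangle has discrepancy at
most `(5 ε + 2 / k) n² ≤ γ n²` against the blown-up reduced graph. Finally the cut distance is
attained at `{0,1}`-valued weights, the form being affine in each weight separately.
-/

open Finset
open scoped Classical

noncomputable section

/-- The 0/1 adjacency indicator of a simple graph, as a real number. -/
def adj01 {V : Type*} (G : SimpleGraph V) (u v : V) : ℝ :=
  if G.Adj u v then 1 else 0

/-- The normalized edit distance between two graphs on the same finite vertex set:
`|E(Γ) △ E(Γ')| / |V|²`, counting ordered pairs. -/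
def editDist {V : Type*} [Fintype V] (G H : SimpleGraph V) : ℝ :=
  (∑ u : V, ∑ v : V, |adj01 G u v - adj01 H u v|) / (Fintype.card V : ℝ) ^ 2

/-- The distance from a graph to a set of graphs on the same vertex set. -/
def distToSet {V : Type*} [Fintype V] (G : SimpleGraph V) (P : Set (SimpleGraph V)) : ℝ :=
  sInf (editDist G '' P)

/-- `φ` is an induced homomorphism from `F` to `G`: it preserves adjacency and
non-adjacency. -/
def IsInducedHom {α β : Type*} (F : SimpleGraph α) (G : SimpleGraph β) (φ : α → β) : Prop :=
  ∀ u v : α, u ≠ v → (F.Adj u v ↔ G.Adj (φ u) (φ v))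

/-- The induced homomorphism density of `F` in `G`: the fraction of all maps
`V(F) → V(G)` that are induced homomorphisms. -/
def homDensity {α β : Type*} [Fintype α] [Fintype β] (F : SimpleGraph α) (G : SimpleGraph β) :
    ℝ :=
  ((Finset.univ.filter fun φ : α → β => IsInducedHom F G φ).card : ℝ) /
    (Fintype.card (α → β) : ℝ)

/-- A family of finite simple graphs: for each number of vertices, a set of graphs. -/
abbrev GraphFamily := ∀ m : ℕ, Set (SimpleGraph (Fin m))

/-- A graph property: for each number of vertices, a set of graphs. -/
abbrev GraphProperty := ∀ n : ℕ, Set (SimpleGraph (Fin n))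

/-- `G` has no induced subgraph isomorphic to a member of the family `F`. -/
def InForb (F : GraphFamily) {n : ℕ} (G : SimpleGraph (Fin n)) : Prop :=
  ∀ (m : ℕ) (F' : SimpleGraph (Fin m)), F' ∈ F m →
    ¬ ∃ φ : Fin m → Fin n, Function.Injective φ ∧ IsInducedHom F' G φ

/-- The hereditary graph property `Forb(F)` of graphs with no induced copy of a member
of `F`. -/
def Forb (F : GraphFamily) : GraphProperty := fun _n => {G | InForb F G}

/-- A weighted graph on `V`: a symmetric function `V × V → [0,1]` (loops allowed). -/
structure WeightedGraph (V : Type*) where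
  w : V → V → ℝ
  symm : ∀ u v, w u v = w v u
  nonneg : ∀ u v, 0 ≤ w u v
  le_one : ∀ u v, w u v ≤ 1

/-- The normalized ℓ₁-distance `d₁` between two weighted graphs on the same vertex set. -/
def d1 {V : Type*} [Fintype V] (R S : WeightedGraph V) : ℝ :=
  (∑ u : V, ∑ v : V, |R.w u v - S.w u v|) / (Fintype.card V : ℝ) ^ 2

/-- The cut-distance between two weighted graphs on the same vertex set. -/
def dCut {V : Type*} [Fintype V] (R S : WeightedGraph V) : ℝ :=
  sSup { d : ℝ | ∃ α β : V → ℝ,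
    (∀ v, α v ∈ Set.Icc (0 : ℝ) 1) ∧ (∀ v, β v ∈ Set.Icc (0 : ℝ) 1) ∧
    d = |∑ x : V, ∑ y : V, α x * (R.w x y - S.w x y) * β y| / (Fintype.card V : ℝ) ^ 2 }

/-- A simple graph viewed as a weighted graph with 0/1 weights. -/
def toWeighted {V : Type*} (G : SimpleGraph V) : WeightedGraph V where
  w := adj01 G
  symm := fun _ _ => by simp [adj01, SimpleGraph.adj_comm]
  nonneg := fun _ _ => by unfold adj01; split <;> norm_num
  le_one := fun _ _ => by unfold adj01; split <;> norm_num

/-- The class of index `i` in the partition of `Fin n` encoded by `p : Fin n → Fin k`. -/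
def cls {n k : ℕ} (p : Fin n → Fin k) (i : Fin k) : Finset (Fin n) :=
  Finset.univ.filter fun v => p v = i

/-- `p` encodes an equipartition: any two class sizes differ by at most one. -/
def IsEquipartition {n k : ℕ} (p : Fin n → Fin k) : Prop :=
  ∀ i j : Fin k, (cls p i).card ≤ (cls p j).card + 1

/-- The number of ordered pairs `(u,v) ∈ A × B` with `u` adjacent to `v`. -/
def pairCount {V : Type*} (G : SimpleGraph V) (A B : Finset V) : ℕ :=
  ∑ u ∈ A, ∑ v ∈ B, if G.Adj u v then 1 else 0

lemma pairCount_symm {V : Type*} (G : SimpleGraph V) (A B : Finset V) :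
    pairCount G A B = pairCount G B A := by
  unfold pairCount
  rw [Finset.sum_comm]
  exact Finset.sum_congr rfl fun v _ => Finset.sum_congr rfl fun u _ => by
    simp [SimpleGraph.adj_comm]

lemma pairCount_le {V : Type*} (G : SimpleGraph V) (A B : Finset V) :
    pairCount G A B ≤ A.card * B.card := by
  unfold pairCount
  calc ∑ u ∈ A, ∑ v ∈ B, (if G.Adj u v then 1 else 0)
      ≤ ∑ u ∈ A, ∑ _v ∈ B, 1 := by
        refine Finset.sum_le_sum fun _ _ => Finset.sum_le_sum fun _ _ => ?_
        split <;> omega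
    _ = A.card * B.card := by simp [Finset.sum_const, smul_eq_mul]

/-- The reduced graph `Γ/𝒱` of `G` with respect to the partition encoded by `p`. -/
def reduced {n k : ℕ} (G : SimpleGraph (Fin n)) (p : Fin n → Fin k) :
    WeightedGraph (Fin k) where
  w i j := (pairCount G (cls p i) (cls p j) : ℝ) /
    (((cls p i).card : ℝ) * ((cls p j).card : ℝ))
  symm i j := by
    try dsimp only
    rw [pairCount_symm, mul_comm]
  nonneg i j := by positivity
  le_one i j := by
    have h : (pairCount G (cls p i) (cls p j) : ℝ) ≤
        ((cls p i).card : ℝ) * ((cls p j).card : ℝ) := by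
      exact_mod_cast pairCount_le G (cls p i) (cls p j)
    exact div_le_one_of_le₀ h (by positivity)

/-- The blown-up reduced graph `Γ_𝒱`. -/
def blowup {n k : ℕ} (G : SimpleGraph (Fin n)) (p : Fin n → Fin k) :
    WeightedGraph (Fin n) where
  w u v := (reduced G p).w (p u) (p v)
  symm _ _ := (reduced G p).symm _ _
  nonneg _ _ := (reduced G p).nonneg _ _
  le_one _ _ := (reduced G p).le_one _ _

/-- The partition encoded by `p` is `γ`-FK-regular for `G`. -/
def IsFKRegular {n k : ℕ} (G : SimpleGraph (Fin n)) (p : Fin n → Fin k) (γ : ℝ) : Prop :=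
  dCut (toWeighted G) (blowup G p) ≤ γ

/-- `G ∈ Red₂(S)`: `G` admits an equipartition into `|V(S)|` classes whose reduced graph
is within `d₁`-distance `2/|V(S)|` of `S`. -/
def InRed2 {k : ℕ} (S : WeightedGraph (Fin k)) {n : ℕ} (G : SimpleGraph (Fin n)) : Prop :=
  ∃ p : Fin n → Fin k, IsEquipartition p ∧ d1 (reduced G p) S ≤ 2 / (k : ℝ)

/-- `S ∈ P*_ε`: every graph in `Red₂(S)` is `ε`-close to `P`. -/
def InStar (P : GraphProperty) (ε : ℝ) {k : ℕ} (S : WeightedGraph (Fin k)) : Prop :=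
  ∀ (n : ℕ) (G : SimpleGraph (Fin n)), InRed2 S G → distToSet G (P n) ≤ ε

/-- The set of numbers `d₁(Γ/𝒱, S)` over all equipartitions `𝒱` of `Γ` into at most `K`
classes and all weighted graphs `S ∈ P*_ε` on the corresponding vertex set. -/
def dhatSet (P : GraphProperty) (ε : ℝ) (K : ℕ) {n : ℕ} (G : SimpleGraph (Fin n)) :
    Set ℝ :=
  { d : ℝ | ∃ k, 1 ≤ k ∧ k ≤ K ∧ ∃ p : Fin n → Fin k, IsEquipartition p ∧
      ∃ S : WeightedGraph (Fin k), InStar P ε S ∧ d = d1 (reduced G p) S }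

/-- `d̂_{K,ε,P}(Γ)`: the minimum over reduced graphs `R` of `Γ` (with at most `K` classes)
of the distance from `R` to `P*_ε`. -/
def dhat (P : GraphProperty) (ε : ℝ) (K : ℕ) {n : ℕ} (G : SimpleGraph (Fin n)) : ℝ :=
  sInf (dhatSet P ε K G)

/-- A graph property `P` is `f`-attestable. -/
def Attestable (P : GraphProperty) (f : ℝ → ℕ) : Prop :=
  ∀ ε : ℝ, 0 < ε → ∀ (n : ℕ) (G : SimpleGraph (Fin n)), G ∈ P n →
    (f ε : ℝ) ^ ((3 : ℝ) / 2) ≤ (n : ℝ) →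
    ∃ k, 1 ≤ k ∧ k ≤ f ε ∧ ∃ p : Fin n → Fin k, IsEquipartition p ∧
      InStar P ε (reduced G p)

/-- The subgraph induced by a vertex subset `X` of size `s`, as a graph on `Fin s`
(via the order isomorphism `Fin s ≃o X`); junk value if `|X| ≠ s`. -/
def sampleGraph {n : ℕ} (G : SimpleGraph (Fin n)) (s : ℕ) (X : Finset (Fin n)) :
    SimpleGraph (Fin s) :=
  if h : X.card = s then SimpleGraph.comap (fun i => ((X.orderIsoOfFin h) i).1) G else ⊥

/-- With probability at least `2/3`, a uniformly random `s`-element vertex subset `X`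
of `G` satisfies `|g(G[X]) - value| ≤ ε`. -/
def EstimatesAt {n : ℕ} (G : SimpleGraph (Fin n)) (s : ℕ) (g : SimpleGraph (Fin s) → ℝ)
    (value ε : ℝ) : Prop :=
  (2 : ℝ) / 3 ≤
    ((((Finset.univ : Finset (Fin n)).powersetCard s).filter fun X =>
        |g (sampleGraph G s X) - value| ≤ ε).card : ℝ) /
      (((Finset.univ : Finset (Fin n)).powersetCard s).card : ℝ)

/-- Relabelling a weighted graph along a bijection of vertex sets. -/
def WeightedGraph.relabel {V W : Type*} (σ : V ≃ W) (R : WeightedGraph W) :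
    WeightedGraph V where
  w u v := R.w (σ u) (σ v)
  symm _ _ := R.symm _ _
  nonneg _ _ := R.nonneg _ _
  le_one _ _ := R.le_one _ _

/-- The weight of a map on an unordered pair of vertices. -/
def pairWeight {α V : Type*} (R : WeightedGraph V) (φ : α → V) : Sym2 α → ℝ :=
  Sym2.lift ⟨fun u v => R.w (φ u) (φ v), fun u v => R.symm (φ u) (φ v)⟩

/-- The induced homomorphism weight `hom_φ(F,R)` of a map `φ : V(F) → V(R)`. -/
def homWeight {α V : Type*} [Fintype α] (F : SimpleGraph α) (R : WeightedGraph V)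
    (φ : α → V) : ℝ :=
  (∏ e ∈ Finset.univ.filter fun e : Sym2 α => e ∈ F.edgeSet, pairWeight R φ e) *
    ∏ e ∈ Finset.univ.filter fun e : Sym2 α => ¬ e.IsDiag ∧ e ∉ F.edgeSet,
      (1 - pairWeight R φ e)

/-- The induced homomorphism density of a graph `F` in a weighted graph `R`: the average
of `hom_φ(F,R)` over all maps `φ : V(F) → V(R)`. -/
def homW {α V : Type*} [Fintype α] [Fintype V] (F : SimpleGraph α) (R : WeightedGraph V) :
    ℝ :=
  (∑ φ : α → V, homWeight F R φ) / (Fintype.card (α → V) : ℝ)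

section CutNorm

variable {V : Type*} [Fintype V]

lemma exists_finset_abs_sum_mul_le (g α : V → ℝ) (hα : ∀ v, α v ∈ Set.Icc (0 : ℝ) 1) :
    ∃ S : Finset V, |∑ x, α x * g x| ≤ |∑ x ∈ S, g x| := by
  have hup : ∑ x, α x * g x ≤ ∑ x with 0 ≤ g x, g x := by
    rw [Finset.sum_filter]
    gcongr with x
    split_ifs with hg
    · exact mul_le_of_le_one_left hg (hα x).2
    · exact mul_nonpos_of_nonneg_of_nonpos (hα x).1 (not_le.1 hg).le
  have hlow : ∑ x with g x < 0, g x ≤ ∑ x, α x * g x := by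
    rw [Finset.sum_filter]
    gcongr with x
    split_ifs with hg
    · nlinarith [(hα x).2]
    · exact mul_nonneg (hα x).1 (not_lt.1 hg)
  rcases le_total 0 (∑ x, α x * g x) with h | h
  · exact ⟨_, by rw [abs_of_nonneg h]; exact hup.trans (le_abs_self _)⟩
  · exact ⟨_, by rw [abs_of_nonpos h]; exact (neg_le_neg hlow).trans (neg_le_abs _)⟩

lemma abs_sum_sum_mul_le_of_forall_finset (D : V → V → ℝ) {c : ℝ}
    (hc : ∀ S T : Finset V, |∑ x ∈ S, ∑ y ∈ T, D x y| ≤ c) (α β : V → ℝ)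
    (hα : ∀ v, α v ∈ Set.Icc (0 : ℝ) 1) (hβ : ∀ v, β v ∈ Set.Icc (0 : ℝ) 1) :
    |∑ x, ∑ y, α x * D x y * β y| ≤ c := by
  obtain ⟨S, hS⟩ := exists_finset_abs_sum_mul_le (fun x => ∑ y, β y * D x y) α hα
  obtain ⟨T, hT⟩ := exists_finset_abs_sum_mul_le (fun y => ∑ x ∈ S, D x y) β hβ
  calc |∑ x, ∑ y, α x * D x y * β y| = |∑ x, α x * ∑ y, β y * D x y| := by
        simp only [Finset.mul_sum]
        exact congrArg _ (Finset.sum_congr rfl fun x _ => Finset.sum_congr rfl fun y _ => by ring)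
    _ ≤ |∑ x ∈ S, ∑ y, β y * D x y| := hS
    _ = |∑ y, β y * ∑ x ∈ S, D x y| := by
        rw [Finset.sum_comm]; simp only [Finset.mul_sum]
    _ ≤ |∑ y ∈ T, ∑ x ∈ S, D x y| := hT
    _ = |∑ x ∈ S, ∑ y ∈ T, D x y| := by rw [Finset.sum_comm]
    _ ≤ c := hc S T

lemma dCut_le_of_forall_finset (R S : WeightedGraph V) {c : ℝ} (hc : 0 ≤ c)
    (h : ∀ A B : Finset V,
      |∑ x ∈ A, ∑ y ∈ B, (R.w x y - S.w x y)| ≤ c * (Fintype.card V : ℝ) ^ 2) :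
    dCut R S ≤ c := by
  refine Real.sSup_le ?_ hc
  rintro d ⟨α, β, hα, hβ, rfl⟩
  exact div_le_of_le_mul₀ (by positivity) hc
    (abs_sum_sum_mul_le_of_forall_finset _ h α β hα hβ)

end CutNorm

lemma IsFKRegular.mono {n k : ℕ} {G : SimpleGraph (Fin n)} {p : Fin n → Fin k} {γ γ' : ℝ}
    (h : IsFKRegular G p γ) (hγ : γ ≤ γ') : IsFKRegular G p γ' :=
  h.trans hγ

section PairDensity

variable {V : Type*} (G : SimpleGraph V)

lemma sum_sum_adj01_sub (A B : Finset V) (δ : ℝ) :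
    ∑ x ∈ A, ∑ y ∈ B, (adj01 G x y - δ) = pairCount G A B - #A * #B * δ := by
  simp only [Finset.sum_sub_distrib, pairCount, adj01, Finset.sum_const, nsmul_eq_mul]
  push_cast
  ring

lemma abs_sum_sum_adj01_sub_le (A B : Finset V) {δ : ℝ} (hδ₀ : 0 ≤ δ) (hδ₁ : δ ≤ 1) :
    |∑ x ∈ A, ∑ y ∈ B, (adj01 G x y - δ)| ≤ #A * #B := by
  have hpair : (pairCount G A B : ℝ) ≤ #A * #B := by exact_mod_cast pairCount_le G A B
  have hAB : (0 : ℝ) ≤ #A * #B := by positivity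
  rw [sum_sum_adj01_sub, abs_le]
  constructor <;> nlinarith [(pairCount G A B).cast_nonneg (α := ℝ)]

variable [DecidableRel G.Adj]

lemma pairCount_eq_edgeDensity_mul (A B : Finset V) :
    (pairCount G A B : ℝ) = G.edgeDensity A B * #A * #B := by
  rcases A.eq_empty_or_nonempty with rfl | hA
  · simp [pairCount]
  rcases B.eq_empty_or_nonempty with rfl | hB
  · simp [pairCount]
  have hinter : pairCount G A B = #(G.interedges A B) := by
    simp only [pairCount, SimpleGraph.interedges, Rel.interedges, Finset.card_filter,
      Finset.sum_product]
    congr!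
  rw [hinter, ← SimpleGraph.card_interedges_div_card]
  push_cast
  field_simp

/-- Large subrectangles are controlled by uniformity, small ones trivially. -/
lemma abs_sum_sum_adj01_sub_edgeDensity_le_of_isUniform {ε : ℝ} {A B C D : Finset V}
    (hAC : A ⊆ C) (hBD : B ⊆ D) (hCD : G.IsUniform ε C D) :
    |∑ x ∈ A, ∑ y ∈ B, (adj01 G x y - G.edgeDensity C D)| ≤ ε * #C * #D := by
  have hA : (#A : ℝ) ≤ #C := by exact_mod_cast Finset.card_le_card hAC
  have hB : (#B : ℝ) ≤ #D := by exact_mod_cast Finset.card_le_card hBD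
  by_cases hbig : (#C : ℝ) * ε ≤ #A ∧ (#D : ℝ) * ε ≤ #B
  · have hdens := (hCD hAC hBD hbig.1 hbig.2).le
    rw [sum_sum_adj01_sub, pairCount_eq_edgeDensity_mul,
      show ∀ a b c d : ℝ, a * b * c - b * c * d = b * c * (a - d) by intros; ring,
      abs_mul, abs_of_nonneg (by positivity)]
    calc (#A * #B : ℝ) * |(G.edgeDensity A B : ℝ) - G.edgeDensity C D| ≤ #C * #D * ε := by
          gcongr
      _ = ε * #C * #D := by ring
  · refine (abs_sum_sum_adj01_sub_le G A B (mod_cast G.edgeDensity_nonneg C D)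
      (mod_cast G.edgeDensity_le_one C D)).trans ?_
    rw [not_and_or, not_le, not_le] at hbig
    rcases hbig with hsmall | hsmall <;> nlinarith [(#A).cast_nonneg (α := ℝ),
      (#B).cast_nonneg (α := ℝ)]

end PairDensity

namespace Finpartition

section Regularity

variable {α : Type*} [DecidableEq α] {A : Finset α} {P : Finpartition A}

lemma sum_part_eq_sum_parts {M : Type*} [AddCommMonoid M] {S : Finset α} (hS : S ⊆ A)
    (f : α → Finset α → M) :
    ∑ x ∈ S, f x (P.part x) = ∑ U ∈ P.parts, ∑ x ∈ S with P.part x = U, f x U := by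
  rw [← Finset.sum_fiberwise_of_maps_to (g := P.part) fun x hx => P.part_mem.2 (hS hx)]
  exact Finset.sum_congr rfl fun U _ => Finset.sum_congr rfl fun x hx => by
    rw [(Finset.mem_filter.1 hx).2]

lemma IsEquipartition.sum_card_sq_le (hP : P.IsEquipartition) :
    ∑ U ∈ P.parts, (#U : ℝ) ^ 2 ≤ 2 * #A ^ 2 / #P.parts := by
  rcases P.parts.eq_empty_or_nonempty with h | h
  · simp [h]
  have hk : (0 : ℝ) < #P.parts := mod_cast h.card_pos
  have hpart : ∀ U ∈ P.parts, (#U : ℝ) ≤ 2 * #A / #P.parts := by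
    intro U hU
    have hU' : (#U : ℝ) ≤ (#A / #P.parts : ℕ) + 1 := mod_cast hP.card_part_le_average_add_one hU
    have hdiv : ((#A / #P.parts : ℕ) : ℝ) ≤ #A / #P.parts := Nat.cast_div_le
    have hone : (1 : ℝ) ≤ #A / #P.parts := (one_le_div hk).2 (mod_cast P.card_parts_le_card)
    linarith [show 2 * (#A : ℝ) / #P.parts = #A / #P.parts + #A / #P.parts by ring]
  calc ∑ U ∈ P.parts, (#U : ℝ) ^ 2 ≤ ∑ U ∈ P.parts, 2 * (#A : ℝ) / #P.parts * #U := by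
        gcongr with U hU
        rw [sq]
        exact mul_le_mul_of_nonneg_right (hpart U hU) (Nat.cast_nonneg _)
    _ = 2 * #A ^ 2 / #P.parts := by
        rw [← Finset.mul_sum, ← Nat.cast_sum, P.sum_card_parts]
        ring

lemma filter_part_eq_subset {S U : Finset α} (hS : S ⊆ A) : {x ∈ S | P.part x = U} ⊆ U := by
  intro x hx
  obtain ⟨hxS, rfl⟩ := Finset.mem_filter.1 hx
  exact P.mem_part_self.2 (hS hxS)

variable {G : SimpleGraph α} [DecidableRel G.Adj] {ε : ℝ}

lemma IsEquipartition.sum_nonUniforms_le (hP : P.IsEquipartition) (hε : 0 < ε)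
    (hG : P.IsUniform G ε) :
    ∑ UW ∈ P.nonUniforms G ε, (#UW.1 * #UW.2 : ℝ) ≤ 4 * ε * #A ^ 2 := by
  rcases A.eq_empty_or_nonempty with rfl | hA
  · simp [nonUniforms, P.parts_eq_empty_iff.2 rfl]
  calc ∑ UW ∈ P.nonUniforms G ε, (#UW.1 * #UW.2 : ℝ) ≤ ε * (#A + #P.parts) ^ 2 :=
        (hP.sum_nonUniforms_lt' hA hε hG).le
    _ ≤ ε * (#A + #A) ^ 2 := by gcongr; exact P.card_parts_le_card
    _ = 4 * ε * #A ^ 2 := by ring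

lemma sum_sum_ite_mem_nonUniforms :
    ∑ U ∈ P.parts, ∑ W ∈ P.parts, (if (U, W) ∈ P.nonUniforms G ε then (#U * #W : ℝ) else 0) =
      ∑ UW ∈ P.nonUniforms G ε, (#UW.1 * #UW.2 : ℝ) := by
  have hsub : P.nonUniforms G ε ⊆ P.parts ×ˢ P.parts := fun UW hUW => by
    have := (P.mk_mem_nonUniforms G).1 hUW
    exact Finset.mem_product.2 ⟨this.1, this.2.1⟩
  rw [← Finset.sum_product' (f := fun U W =>
    if (U, W) ∈ P.nonUniforms G ε then (#U * #W : ℝ) else 0)]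
  simp only [Prod.mk.eta]
  rw [Finset.sum_ite_mem, Finset.inter_eq_right.2 hsub]

lemma abs_sum_sum_adj01_sub_edgeDensity_le (hε : 0 ≤ ε) {U W S T : Finset α}
    (hU : U ∈ P.parts) (hW : W ∈ P.parts) (hSU : S ⊆ U) (hTW : T ⊆ W) :
    |∑ x ∈ S, ∑ y ∈ T, (adj01 G x y - G.edgeDensity U W)| ≤
      ε * #U * #W + (if (U, W) ∈ P.nonUniforms G ε then (#U * #W : ℝ) else 0) +
        (if U = W then (#U * #W : ℝ) else 0) := by
  have hcrude : |∑ x ∈ S, ∑ y ∈ T, (adj01 G x y - G.edgeDensity U W)| ≤ #U * #W :=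
    (abs_sum_sum_adj01_sub_le G S T (mod_cast G.edgeDensity_nonneg U W)
      (mod_cast G.edgeDensity_le_one U W)).trans
      (mul_le_mul (mod_cast Finset.card_le_card hSU) (mod_cast Finset.card_le_card hTW)
        (by positivity) (by positivity))
  have hε' : 0 ≤ ε * #U * #W := by positivity
  have hUW₀ : (0 : ℝ) ≤ #U * #W := by positivity
  by_cases hUW : U = W
  · rw [if_pos hUW]
    split_ifs <;> linarith
  by_cases hN : (U, W) ∈ P.nonUniforms G ε
  · rw [if_pos hN, if_neg hUW]
    linarith
  rw [if_neg hN, if_neg hUW, add_zero, add_zero]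
  refine abs_sum_sum_adj01_sub_edgeDensity_le_of_isUniform G hSU hTW ?_
  by_contra h
  exact hN ((P.mk_mem_nonUniforms G).2 ⟨hU, hW, hUW, h⟩)

lemma IsEquipartition.abs_sum_sum_adj01_sub_edgeDensity_part_le (hP : P.IsEquipartition)
    (hε : 0 < ε) (hG : P.IsUniform G ε) {S T : Finset α} (hS : S ⊆ A) (hT : T ⊆ A) :
    |∑ x ∈ S, ∑ y ∈ T, (adj01 G x y - G.edgeDensity (P.part x) (P.part y))| ≤
      (5 * ε + 2 / #P.parts) * #A ^ 2 := by
  have hdecomp : ∑ x ∈ S, ∑ y ∈ T, (adj01 G x y - G.edgeDensity (P.part x) (P.part y)) =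
      ∑ U ∈ P.parts, ∑ W ∈ P.parts, ∑ x ∈ S with P.part x = U, ∑ y ∈ T with P.part y = W,
        (adj01 G x y - G.edgeDensity U W) := by
    rw [P.sum_part_eq_sum_parts hS
      (fun x U => ∑ y ∈ T, (adj01 G x y - G.edgeDensity U (P.part y)))]
    exact Finset.sum_congr rfl fun U _ => (Finset.sum_congr rfl fun x _ =>
      P.sum_part_eq_sum_parts hT (fun y W => adj01 G x y - G.edgeDensity U W)).trans
        Finset.sum_comm
  have hdiag : ∑ U ∈ P.parts, ∑ W ∈ P.parts, (if U = W then (#U * #W : ℝ) else 0) =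
      ∑ U ∈ P.parts, (#U : ℝ) ^ 2 := by
    simp only [Finset.sum_ite_eq]
    exact Finset.sum_congr rfl fun U hU => by rw [if_pos hU, sq]
  have hall : ∑ U ∈ P.parts, ∑ W ∈ P.parts, ε * #U * #W = ε * #A ^ 2 := by
    simp_rw [mul_assoc, ← Finset.mul_sum, ← Finset.sum_mul, ← Nat.cast_sum, P.sum_card_parts]
    ring
  calc |∑ x ∈ S, ∑ y ∈ T, (adj01 G x y - G.edgeDensity (P.part x) (P.part y))|
      ≤ ∑ U ∈ P.parts, ∑ W ∈ P.parts, |∑ x ∈ S with P.part x = U,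
          ∑ y ∈ T with P.part y = W, (adj01 G x y - G.edgeDensity U W)| := by
        rw [hdecomp]
        exact (Finset.abs_sum_le_sum_abs _ _).trans
          (Finset.sum_le_sum fun U _ => Finset.abs_sum_le_sum_abs _ _)
    _ ≤ ∑ U ∈ P.parts, ∑ W ∈ P.parts, (ε * #U * #W +
          (if (U, W) ∈ P.nonUniforms G ε then (#U * #W : ℝ) else 0) +
          (if U = W then (#U * #W : ℝ) else 0)) := by
        gcongr with U hU W hW
        exact abs_sum_sum_adj01_sub_edgeDensity_le hε.le hU hW (filter_part_eq_subset hS)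
          (filter_part_eq_subset hT)
    _ = ε * #A ^ 2 + ∑ UW ∈ P.nonUniforms G ε, (#UW.1 * #UW.2 : ℝ) +
          ∑ U ∈ P.parts, (#U : ℝ) ^ 2 := by
        simp only [Finset.sum_add_distrib, hall, sum_sum_ite_mem_nonUniforms, hdiag]
    _ ≤ ε * #A ^ 2 + 4 * ε * #A ^ 2 + 2 * #A ^ 2 / #P.parts := by
        gcongr
        · exact hP.sum_nonUniforms_le hε hG
        · exact hP.sum_card_sq_le
    _ = (5 * ε + 2 / #P.parts) * #A ^ 2 := by ring

end Regularity

def index {V : Type*} [Fintype V] [DecidableEq V] (P : Finpartition (Finset.univ : Finset V))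
    (v : V) : Fin #P.parts :=
  P.parts.equivFin ⟨P.part v, P.part_mem.2 (Finset.mem_univ v)⟩

variable {n : ℕ} {P : Finpartition (Finset.univ : Finset (Fin n))}

lemma cls_index (i : Fin #P.parts) : cls P.index i = P.parts.equivFin.symm i := by
  ext v
  simp only [cls, index, Finset.mem_filter, Finset.mem_univ, true_and,
    ← Equiv.eq_symm_apply, Subtype.ext_iff]
  exact P.part_eq_iff_mem (P.parts.equivFin.symm i).2

lemma cls_index_self (v : Fin n) : cls P.index (P.index v) = P.part v := by
  rw [cls_index, index, Equiv.symm_apply_apply]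

lemma IsEquipartition.index (hP : P.IsEquipartition) : _root_.IsEquipartition P.index :=
  fun i j => by
    simp only [cls_index]
    exact hP (Finset.mem_coe.2 (P.parts.equivFin.symm i).2)
      (Finset.mem_coe.2 (P.parts.equivFin.symm j).2)

lemma blowup_index_w (G : SimpleGraph (Fin n)) [DecidableRel G.Adj] (x y : Fin n) :
    (blowup G P.index).w x y = G.edgeDensity (P.part x) (P.part y) := by
  show (pairCount G (cls P.index (P.index x)) (cls P.index (P.index y)) : ℝ) / _ = _
  have hx : (#(P.part x) : ℝ) ≠ 0 := by
    exact_mod_cast (Finset.card_pos.2 ⟨x, P.mem_part_self.2 (Finset.mem_univ x)⟩).ne'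
  have hy : (#(P.part y) : ℝ) ≠ 0 := by
    exact_mod_cast (Finset.card_pos.2 ⟨y, P.mem_part_self.2 (Finset.mem_univ y)⟩).ne'
  rw [cls_index_self, cls_index_self, pairCount_eq_edgeDensity_mul]
  field_simp

lemma IsEquipartition.isFKRegular_index {G : SimpleGraph (Fin n)} [DecidableRel G.Adj] {ε : ℝ}
    (hP : P.IsEquipartition) (hε : 0 < ε) (hG : P.IsUniform G ε) :
    IsFKRegular G P.index (5 * ε + 2 / #P.parts) := by
  refine dCut_le_of_forall_finset _ _ (by positivity) fun S T => ?_
  have := hP.abs_sum_sum_adj01_sub_edgeDensity_part_le hε hG (Finset.subset_univ S)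
    (Finset.subset_univ T)
  simp only [toWeighted, blowup_index_w]
  simpa only [Finset.card_univ] using this

end Finpartition

theorem frieze_kannan_regularity_general (γ : ℝ) (hγ : 0 < γ) (k₀ : ℕ) :
    ∃ K : ℕ, 0 < K ∧
      ∀ (n : ℕ), K ≤ n → ∀ Γ : SimpleGraph (Fin n),
        ∃ k, k₀ ≤ k ∧ k ≤ K ∧
          ∃ p : Fin n → Fin k, IsEquipartition p ∧ IsFKRegular Γ p γ := by
  set ε := γ / 10 with hε
  set l := max k₀ ⌈4 / γ⌉₊
  refine ⟨SzemerediRegularity.bound ε l, SzemerediRegularity.bound_pos ε l, fun n hn Γ => ?_⟩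
  have hl : l ≤ Fintype.card (Fin n) := by
    rw [Fintype.card_fin]
    exact (SzemerediRegularity.le_bound ε l).trans hn
  obtain ⟨P, hPeq, hlP, hPK, hPuni⟩ := szemeredi_regularity Γ (show 0 < ε by positivity) hl
  have hk : 4 / γ ≤ #P.parts :=
    (Nat.le_ceil _).trans (mod_cast (le_max_right _ _).trans hlP)
  have hk' : 2 / (#P.parts : ℝ) ≤ γ / 2 := by
    rw [div_le_iff₀ ((div_pos four_pos hγ).trans_le hk)]
    rw [div_le_iff₀ hγ] at hk
    linarith
  refine ⟨#P.parts, (le_max_left _ _).trans hlP, hPK, P.index, hPeq.index, ?_⟩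
  exact (hPeq.isFKRegular_index (by positivity) hPuni).mono (by linarith)

/-- Frieze–Kannan Regularity Lemma. For every `γ > 0` and `k₀ ≥ 1`
there is `K` such that every graph on `n ≥ K` vertices admits a `γ`-FK-regular
equipartition into `k` classes with `k₀ ≤ k ≤ K`. -/
theorem frieze_kannan_regularity (γ : ℝ) (hγ : 0 < γ) (k₀ : ℕ) (hk₀ : 0 < k₀) :
    ∃ K : ℕ, 0 < K ∧
      ∀ (n : ℕ), K ≤ n → ∀ Γ : SimpleGraph (Fin n),
        ∃ k, k₀ ≤ k ∧ k ≤ K ∧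
          ∃ p : Fin n → Fin k, IsEquipartition p ∧ IsFKRegular Γ p γ :=
  frieze_kannan_regularity_general γ hγ k₀
end
end

section
/- Let Γ be a graph on n vertices, let 𝒱 = {V₁,…,V_k} be an equipartition of V(Γ) into k classes (so ||V_i| − |V_j|| ≤ 1 for all i, j), let R = Γ/𝒱 be the reduced graph and Γ_𝒱 the blown-up reduced graph, and let F be a graph on f vertices. If n ≥ 2kf, then |hom(F, R) − hom(F, Γ_𝒱)| ≤ 2kf/n. -/
open Finset
open scoped Classical

noncomputable section

lemma pairWeight_mem {α V : Type*} (R : WeightedGraph V) (φ : α → V) (e : Sym2 α) :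
    0 ≤ pairWeight R φ e ∧ pairWeight R φ e ≤ 1 := by
  induction e using Sym2.ind with
  | _ u v => exact ⟨R.nonneg _ _, R.le_one _ _⟩

lemma homWeight_nonneg {α V : Type*} [Fintype α] (F : SimpleGraph α) (R : WeightedGraph V)
    (φ : α → V) : 0 ≤ homWeight F R φ :=
  mul_nonneg (Finset.prod_nonneg fun e _ => (pairWeight_mem R φ e).1)
    (Finset.prod_nonneg fun e _ => by linarith [(pairWeight_mem R φ e).2])

lemma homWeight_le_one {α V : Type*} [Fintype α] (F : SimpleGraph α) (R : WeightedGraph V)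
    (φ : α → V) : homWeight F R φ ≤ 1 := by
  have h1 : (∏ e ∈ Finset.univ.filter fun e : Sym2 α => e ∈ F.edgeSet, pairWeight R φ e) ≤ 1 :=
    Finset.prod_le_one (fun e _ => (pairWeight_mem R φ e).1) (fun e _ => (pairWeight_mem R φ e).2)
  have h2 : (∏ e ∈ Finset.univ.filter fun e : Sym2 α => ¬ e.IsDiag ∧ e ∉ F.edgeSet,
      (1 - pairWeight R φ e)) ≤ 1 :=
    Finset.prod_le_one (fun e _ => by linarith [(pairWeight_mem R φ e).2])
      (fun e _ => by linarith [(pairWeight_mem R φ e).1])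
  have h0 : (0:ℝ) ≤ ∏ e ∈ Finset.univ.filter fun e : Sym2 α => ¬ e.IsDiag ∧ e ∉ F.edgeSet,
      (1 - pairWeight R φ e) :=
    Finset.prod_nonneg fun e _ => by linarith [(pairWeight_mem R φ e).2]
  calc homWeight F R φ ≤ 1 * 1 := mul_le_mul h1 h2 h0 (by norm_num)
    _ = 1 := one_mul 1

lemma homW_zero_source {V : Type*} [Fintype V] (F : SimpleGraph (Fin 0)) (R : WeightedGraph V) :
    homW F R = 1 := by
  haveI hE : IsEmpty (Sym2 (Fin 0)) := by
    constructor; intro e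
    induction e using Sym2.ind with | _ u v => exact u.elim0
  unfold homW homWeight
  simp

lemma homW_empty_target {f : ℕ} (hf : 0 < f) (F : SimpleGraph (Fin f)) (R : WeightedGraph (Fin 0)) :
    homW F R = 0 := by
  haveI : IsEmpty (Fin f → Fin 0) := ⟨fun φ => (φ ⟨0, hf⟩).elim0⟩
  unfold homW
  simp

lemma abs_prod_sub_prod_le_sum' {ι : Type*} (s : Finset ι) (a b : ι → ℝ)
    (ha : ∀ i ∈ s, 0 ≤ a i ∧ a i ≤ 1) (hb : ∀ i ∈ s, 0 ≤ b i ∧ b i ≤ 1) :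
    |∏ i ∈ s, a i - ∏ i ∈ s, b i| ≤ ∑ i ∈ s, |a i - b i| := by
  induction s using Finset.cons_induction with
  | empty => simp
  | cons i s hi ih =>
    simp only [Finset.prod_cons, Finset.sum_cons]
    have hP := ih (fun j hj => ha j (Finset.mem_cons_of_mem hj))
      (fun j hj => hb j (Finset.mem_cons_of_mem hj))
    have hQ0 : 0 ≤ ∏ j ∈ s, b j :=
      Finset.prod_nonneg fun j hj => (hb j (Finset.mem_cons_of_mem hj)).1
    have hQ1 : ∏ j ∈ s, b j ≤ 1 :=
      Finset.prod_le_one (fun j hj => (hb j (Finset.mem_cons_of_mem hj)).1)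
        (fun j hj => (hb j (Finset.mem_cons_of_mem hj)).2)
    have hai := ha i (Finset.mem_cons_self i s)
    have key : a i * ∏ j ∈ s, a j - b i * ∏ j ∈ s, b j
        = a i * (∏ j ∈ s, a j - ∏ j ∈ s, b j) + (a i - b i) * ∏ j ∈ s, b j := by ring
    rw [key]
    calc |a i * (∏ j ∈ s, a j - ∏ j ∈ s, b j) + (a i - b i) * ∏ j ∈ s, b j|
        ≤ |a i * (∏ j ∈ s, a j - ∏ j ∈ s, b j)| + |(a i - b i) * ∏ j ∈ s, b j| := abs_add_le _ _
      _ = |a i| * |∏ j ∈ s, a j - ∏ j ∈ s, b j| + |a i - b i| * |∏ j ∈ s, b j| := by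
          rw [abs_mul, abs_mul]
      _ ≤ 1 * (∑ j ∈ s, |a j - b j|) + |a i - b i| * 1 := by
          gcongr
          · rw [abs_of_nonneg hai.1]; exact hai.2
          · rw [abs_of_nonneg hQ0]; exact hQ1
      _ = |a i - b i| + ∑ j ∈ s, |a j - b j| := by ring

lemma abs_prod_sub_prod_le_scaled {ι : Type*} (s : Finset ι) (a b : ι → ℝ) (M : ℝ) (hM : 0 < M)
    (ha : ∀ i ∈ s, 0 ≤ a i ∧ a i ≤ M) (hb : ∀ i ∈ s, 0 ≤ b i ∧ b i ≤ M) :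
    |∏ i ∈ s, a i - ∏ i ∈ s, b i| ≤ (∑ i ∈ s, |a i - b i|) * M ^ s.card / M := by
  have key := abs_prod_sub_prod_le_sum' s (fun i => a i / M) (fun i => b i / M)
    (fun i hi => ⟨div_nonneg (ha i hi).1 hM.le, div_le_one_of_le₀ (ha i hi).2 hM.le⟩)
    (fun i hi => ⟨div_nonneg (hb i hi).1 hM.le, div_le_one_of_le₀ (hb i hi).2 hM.le⟩)
  have e1 : ∀ c : ι → ℝ, ∏ i ∈ s, c i / M = (∏ i ∈ s, c i) / M ^ s.card := by
    intro c; rw [Finset.prod_div_distrib, Finset.prod_const]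
  rw [e1 a, e1 b, div_sub_div_same] at key
  have e2 : ∑ i ∈ s, |a i / M - b i / M| = (∑ i ∈ s, |a i - b i|) / M := by
    rw [Finset.sum_div]
    refine Finset.sum_congr rfl fun i _ => ?_
    rw [div_sub_div_same, abs_div, abs_of_pos hM]
  rw [e2, abs_div, abs_of_pos (pow_pos hM s.card)] at key
  rw [div_le_div_iff₀ (pow_pos hM s.card) hM] at key
  rw [le_div_iff₀ hM]
  exact key

/-- For an equipartition `𝒱` of a graph `Γ` on `n` vertices into `k`
classes, with reduced graph `R` and blown-up reduced graph `Γ_𝒱`, and a graph `F` on `f`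
vertices, if `n ≥ 2kf` then `|hom(F,R) − hom(F,Γ_𝒱)| ≤ 2kf/n`. -/
theorem abs_homW_reduced_sub_homW_blowup_le (n k f : ℕ) (Γ : SimpleGraph (Fin n))
    (p : Fin n → Fin k) (hp : IsEquipartition p)
    (F : SimpleGraph (Fin f)) (hn : 2 * k * f ≤ n) :
    |homW F (reduced Γ p) - homW F (blowup Γ p)| ≤ 2 * (k : ℝ) * (f : ℝ) / (n : ℝ) := by
  have hRHS0 : (0:ℝ) ≤ 2 * (k:ℝ) * (f:ℝ) / (n:ℝ) := by positivity
  rcases Nat.eq_zero_or_pos n with hn0 | hnpos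
  · subst hn0
    have hkf : k = 0 ∨ f = 0 := by
      have h0 : 2 * k * f = 0 := Nat.le_zero.mp hn
      rcases Nat.mul_eq_zero.mp h0 with h | h
      · left; omega
      · right; exact h
    rcases Nat.eq_zero_or_pos f with hf | hf
    · subst hf
      rw [homW_zero_source, homW_zero_source, sub_self, abs_zero]
      exact hRHS0
    · have hk0 : k = 0 := by
        rcases hkf with h | h
        · exact h
        · omega
      subst hk0
      rw [homW_empty_target hf, homW_empty_target hf, sub_self, abs_zero]
      exact hRHS0
  have hk : 0 < k := by
    rcases Nat.eq_zero_or_pos k with h | h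
    · subst h; exact (p ⟨0, hnpos⟩).elim0
    · exact h
  have hkR : (0:ℝ) < k := by exact_mod_cast hk
  have hnR : (0:ℝ) < n := by exact_mod_cast hnpos
  letI : DecidableEq (Fin f) := fun a b => Classical.propDecidable (a = b)
  set R := reduced Γ p with hRdef
  set c : Fin k → ℕ := fun i => (cls p i).card with hcdef
  -- class sizes sum to n
  have hsum : ∑ i : Fin k, c i = n := by
    have h := Finset.card_eq_sum_card_fiberwise
      (f := p) (s := (univ : Finset (Fin n))) (t := (univ : Finset (Fin k)))
      (fun x _ => mem_univ _)
    simpa [cls, hcdef] using h.symm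
  -- upper and lower bounds on class sizes
  have hub' : ∀ i, (k : ℕ) * c i ≤ n + k := by
    intro i
    calc k * c i = ∑ _j : Fin k, c i := by simp [Finset.sum_const, mul_comm]
      _ ≤ ∑ j : Fin k, (c j + 1) := Finset.sum_le_sum fun j _ => hp i j
      _ = n + k := by rw [Finset.sum_add_distrib, hsum]; simp
  have hlb' : ∀ i, n ≤ k * c i + k := by
    intro i
    calc n = ∑ j : Fin k, c j := hsum.symm
      _ ≤ ∑ _j : Fin k, (c i + 1) := Finset.sum_le_sum fun j _ => hp j i
      _ = k * c i + k := by simp [Finset.sum_const, mul_comm, mul_add]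
  set M : ℝ := 1/(k:ℝ) + 1/(n:ℝ) with hMdef
  have hM : 0 < M := by positivity
  have hub : ∀ i, (c i : ℝ)/n ≤ M := by
    intro i
    have h1 : (k : ℝ) * c i ≤ (n:ℝ) + k := by exact_mod_cast hub' i
    rw [hMdef, div_add_div _ _ (ne_of_gt hkR) (ne_of_gt hnR), div_le_div_iff₀ hnR (by positivity)]
    nlinarith
  have hlb : ∀ i, 1/(k:ℝ) - 1/(n:ℝ) ≤ (c i : ℝ)/n := by
    intro i
    have h1 : (n : ℝ) ≤ (k:ℝ) * c i + k := by exact_mod_cast hlb' i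
    rw [div_sub_div _ _ (ne_of_gt hkR) (ne_of_gt hnR), div_le_div_iff₀ (by positivity) hnR]
    nlinarith
  -- blowup weight in terms of reduced weight
  have hpw : ∀ (φ : Fin f → Fin n) (e : Sym2 (Fin f)),
      pairWeight (blowup Γ p) φ e = pairWeight R (p ∘ φ) e := by
    intro φ e
    induction e using Sym2.ind with
    | _ u v => rfl
  have hblow : ∀ φ : Fin f → Fin n,
      homWeight F (blowup Γ p) φ = homWeight F R (p ∘ φ) := by
    intro φ
    unfold homWeight
    simp only [hpw]
  -- fiber count
  have hfiber : ∀ ψ : Fin f → Fin k,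
      (univ.filter fun φ : Fin f → Fin n => p ∘ φ = ψ)
        = Fintype.piFinset fun u => cls p (ψ u) := by
    intro ψ
    ext φ
    simp [Fintype.mem_piFinset, cls, funext_iff, Function.comp]
  have hsum2 : ∑ φ : Fin f → Fin n, homWeight F R (p ∘ φ)
      = ∑ ψ : Fin f → Fin k, (∏ u, (c (ψ u) : ℝ)) * homWeight F R ψ := by
    rw [← Finset.sum_fiberwise univ (fun φ : Fin f → Fin n => p ∘ φ)
      (fun φ => homWeight F R (p ∘ φ))]
    refine Finset.sum_congr rfl fun ψ _ => ?_
    rw [Finset.sum_congr rfl (fun φ hφ => by rw [(Finset.mem_filter.mp hφ).2]),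
      Finset.sum_const, hfiber ψ, Fintype.card_piFinset]
    rw [nsmul_eq_mul]
    push_cast
    rfl
  have eb : homW F (blowup Γ p)
      = (∑ φ : Fin f → Fin n, homWeight F (blowup Γ p) φ) / (n:ℝ)^f := by
    unfold homW
    rw [Fintype.card_fun, Fintype.card_fin, Fintype.card_fin]
    push_cast
    congr!
  have ek : homW F R = (∑ ψ : Fin f → Fin k, homWeight F R ψ) / (k:ℝ)^f := by
    unfold homW
    rw [Fintype.card_fun, Fintype.card_fin, Fintype.card_fin]
    push_cast
    congr!
  have hdiff : homW F R - homW F (blowup Γ p)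
      = ∑ ψ : Fin f → Fin k,
          homWeight F R ψ * (((1:ℝ)/k)^f - ∏ u, ((c (ψ u):ℝ)/n)) := by
    have e0 : ∑ φ : Fin f → Fin n, homWeight F (blowup Γ p) φ
        = ∑ ψ : Fin f → Fin k, (∏ u, (c (ψ u) : ℝ)) * homWeight F R ψ :=
      (Finset.sum_congr rfl fun φ _ => hblow φ).trans hsum2
    rw [ek, eb, e0,
      Finset.sum_div, Finset.sum_div, ← Finset.sum_sub_distrib]
    refine Finset.sum_congr rfl fun ψ _ => ?_
    rw [Finset.prod_div_distrib, Finset.prod_const, Finset.card_univ, Fintype.card_fin]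
    have h1 : ((k:ℝ))^f ≠ 0 := by positivity
    have h2 : ((n:ℝ))^f ≠ 0 := by positivity
    field_simp
    have h3 : (k:ℝ)^f * (1/(k:ℝ))^f = 1 := by
      rw [← mul_pow, mul_one_div_cancel (ne_of_gt hkR), one_pow]
    linear_combination (-(homWeight F R ψ * (n:ℝ) ^ f)) * h3
  -- per-map estimate
  have hperψ : ∀ ψ : Fin f → Fin k,
      |((1:ℝ)/k)^f - ∏ u, ((c (ψ u):ℝ)/n)| ≤ (f:ℝ)/n * M^f / M := by
    intro ψ
    have h1 := abs_prod_sub_prod_le_scaled (univ : Finset (Fin f))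
      (fun _ => 1/(k:ℝ)) (fun u => (c (ψ u):ℝ)/n) M hM
      (fun i _ => ⟨by positivity, by rw [hMdef]; nlinarith [one_div_pos.mpr hnR]⟩)
      (fun i _ => ⟨by positivity, hub (ψ i)⟩)
    rw [Finset.prod_const, Finset.card_univ, Fintype.card_fin] at h1
    have h2 : ∑ u : Fin f, |1/(k:ℝ) - (c (ψ u):ℝ)/n| ≤ (f:ℝ) * (1/n) := by
      calc ∑ u : Fin f, |1/(k:ℝ) - (c (ψ u):ℝ)/n| ≤ ∑ _u : Fin f, (1:ℝ)/n := by
            refine Finset.sum_le_sum fun u _ => ?_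
            rw [abs_le]
            constructor
            · linarith [hub (ψ u)]
            · linarith [hlb (ψ u)]
        _ = (f:ℝ) * (1/n) := by simp [Finset.sum_const, mul_comm]
    calc |((1:ℝ)/k)^f - ∏ u, ((c (ψ u):ℝ)/n)|
        ≤ (∑ u : Fin f, |1/(k:ℝ) - (c (ψ u):ℝ)/n|) * M ^ f / M := h1
      _ ≤ ((f:ℝ) * (1/n)) * M ^ f / M := by gcongr
      _ = (f:ℝ)/n * M^f / M := by ring
  -- final computation
  have hx : (k:ℝ)/n * f ≤ 1/2 := by
    rw [div_mul_eq_mul_div, div_le_iff₀ hnR]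
    have h2 : (2:ℝ)*k*f ≤ n := by exact_mod_cast hn
    linarith
  have hexp : (1 + (k:ℝ)/n)^f ≤ 2 := by
    have h1 : (1 + (k:ℝ)/n)^f ≤ Real.exp ((k:ℝ)/n)^f := by
      apply pow_le_pow_left₀ (by positivity)
      linarith [Real.add_one_le_exp ((k:ℝ)/n)]
    have h2 : Real.exp ((k:ℝ)/n)^f = Real.exp ((f:ℝ) * ((k:ℝ)/n)) := by
      rw [← Real.exp_nat_mul]
    have h3 : Real.exp ((f:ℝ) * ((k:ℝ)/n)) ≤ Real.exp (1/2) :=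
      Real.exp_le_exp.mpr (by rw [mul_comm]; exact hx)
    have hm : Real.exp (1/2) * Real.exp (1/2) = Real.exp 1 := by
      rw [← Real.exp_add]; norm_num
    have h4 : Real.exp ((1:ℝ)/2) ≤ 2 := by
      nlinarith [Real.exp_one_lt_d9, Real.exp_pos ((1:ℝ)/2)]
    calc (1 + (k:ℝ)/n)^f ≤ Real.exp ((k:ℝ)/n)^f := h1
      _ = Real.exp ((f:ℝ) * ((k:ℝ)/n)) := h2
      _ ≤ Real.exp (1/2) := h3
      _ ≤ 2 := h4
  have hkM : (k:ℝ) * M = 1 + (k:ℝ)/n := by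
    rw [hMdef]; field_simp
  have hfinal : (k:ℝ)^f * ((f:ℝ)/n * M^f / M) ≤ 2 * (k:ℝ) * (f:ℝ) / n := by
    have h5 : (k:ℝ)^f * M^f ≤ 2 * ((k:ℝ) * M) := by
      rw [← mul_pow, hkM]
      nlinarith [hexp, (show (0:ℝ) ≤ (k:ℝ)/n by positivity)]
    have e1 : (k:ℝ)^f * ((f:ℝ)/n * M^f / M) = ((k:ℝ)^f * M^f) * ((f:ℝ) / n) / M := by
      ring
    have e2 : (2:ℝ)*(k:ℝ)*(f:ℝ)/n = (2*((k:ℝ)*M)) * ((f:ℝ)/n) / M := by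
      field_simp
    rw [e1, e2]
    gcongr
  calc |homW F R - homW F (blowup Γ p)|
      = |∑ ψ : Fin f → Fin k,
          homWeight F R ψ * (((1:ℝ)/k)^f - ∏ u, ((c (ψ u):ℝ)/n))| := by rw [hdiff]
    _ ≤ ∑ ψ : Fin f → Fin k,
          |homWeight F R ψ * (((1:ℝ)/k)^f - ∏ u, ((c (ψ u):ℝ)/n))| :=
        Finset.abs_sum_le_sum_abs _ _
    _ ≤ ∑ _ψ : Fin f → Fin k, (f:ℝ)/n * M^f / M := by
        refine Finset.sum_le_sum fun ψ _ => ?_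
        rw [abs_mul]
        calc |homWeight F R ψ| * |((1:ℝ)/k)^f - ∏ u, ((c (ψ u):ℝ)/n)|
            ≤ 1 * ((f:ℝ)/n * M^f / M) := by
              apply mul_le_mul _ (hperψ ψ) (abs_nonneg _) (by norm_num)
              rw [abs_of_nonneg (homWeight_nonneg F R ψ)]
              exact homWeight_le_one F R ψ
          _ = (f:ℝ)/n * M^f / M := one_mul _
    _ = (k:ℝ)^f * ((f:ℝ)/n * M^f / M) := by
        rw [Finset.sum_const, Finset.card_univ, nsmul_eq_mul, Fintype.card_fun]
        push_cast
        simp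
    _ ≤ 2 * (k:ℝ) * (f:ℝ) / n := hfinal
end
end
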